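/- Low wavenumber refinement: there exists a constant c > 0 such that for all ε ∈ (0,1) and all k ∈ ℤ with 0 < |k| < 1/(2πε): m_ε^t(k) − |log ε|/(2π) ≤ c(1 + |log|k||) and m_ε^n(k) − |log ε|/(4π) ≤ c(1 + |log|k||); moreover m_ε^t(0) − |log ε|/(2π) = 0 and m_ε^n(0) − |log ε|/(4π) = 0. -/

import Mathlib

open scoped Real BigOperators
open MeasureTheory

noncomputable section

namespace Filament

/-- ℝ³. -/
abbrev V : Type := EuclideanSpace ℝ (Fin 3)
/-- ℂ³. -/
abbrev VC : Type := EuclideanSpace ℂ (Fin 3)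

/-- Fourier coefficient `ℱ[h](k) = ∫_𝕋 h(s) e^{2πiks} ds` of a (1-periodic) complex valued
function on the unit torus, viewed as a function on `ℝ`. -/
def fc (h : ℝ → ℂ) (k : ℤ) : ℂ :=
  ∫ s in (0:ℝ)..1, h s * Complex.exp (2 * (Real.pi : ℂ) * Complex.I * (k : ℂ) * (s : ℂ))

/-- Componentwise Fourier coefficient of an ℝ³-valued function. -/
def fcV (h : ℝ → V) (k : ℤ) : VC :=
  (WithLp.equiv 2 (Fin 3 → ℂ)).symm (fun i => fc (fun s => ((h s i : ℝ) : ℂ)) k)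

/-- Fourier coefficient of a real scalar function. -/
def fcR (h : ℝ → ℝ) (k : ℤ) : ℂ := fc (fun s => ((h s : ℝ) : ℂ)) k

/-- Squared inhomogeneous Sobolev norm `‖h‖_{H^σ}²`. -/
def HsqV (σ : ℝ) (h : ℝ → V) : ℝ := ∑' k : ℤ, (1 + (k:ℝ)^2) ^ σ * ‖fcV h k‖^2

/-- Sobolev norm `‖h‖_{H^σ}`. -/
def HnV (σ : ℝ) (h : ℝ → V) : ℝ := Real.sqrt (HsqV σ h)

/-- Squared inhomogeneous Sobolev norm of a scalar function. -/
def HsqR (σ : ℝ) (h : ℝ → ℝ) : ℝ := ∑' k : ℤ, (1 + (k:ℝ)^2) ^ σ * ‖fcR h k‖^2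

/-- Sobolev norm of a scalar function. -/
def HnR (σ : ℝ) (h : ℝ → ℝ) : ℝ := Real.sqrt (HsqR σ h)

/-- Squared homogeneous Sobolev seminorm `‖h‖_{Ḣ^σ}²` (the `k = 0` mode is omitted). -/
def HdotsqV (σ : ℝ) (h : ℝ → V) : ℝ :=
  ∑' k : {k : ℤ // k ≠ 0}, (|((k : ℤ) : ℝ)|) ^ (2*σ) * ‖fcV h k‖^2

/-- Homogeneous Sobolev seminorm `‖h‖_{Ḣ^σ}`. -/
def HdotV (σ : ℝ) (h : ℝ → V) : ℝ := Real.sqrt (HdotsqV σ h)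

/-- Membership `h ∈ H^σ(𝕋; ℝ³)`. -/
def MemHV (σ : ℝ) (h : ℝ → V) : Prop :=
  Summable (fun k : ℤ => (1 + (k:ℝ)^2) ^ σ * ‖fcV h k‖^2)

/-- Membership `h ∈ H^σ(𝕋; ℝ)`. -/
def MemHR (σ : ℝ) (h : ℝ → ℝ) : Prop :=
  Summable (fun k : ℤ => (1 + (k:ℝ)^2) ^ σ * ‖fcR h k‖^2)

/-- Modified Bessel function of the second kind of (integer) order `j`:
`K_j(x) = ∫₀^∞ e^{−x cosh t} cosh (j t) dt`. -/
def besselK (j : ℕ) (x : ℝ) : ℝ :=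
  ∫ t in Set.Ioi (0:ℝ), Real.exp (-x * Real.cosh t) * Real.cosh ((j : ℝ) * t)

/-- `|log ε|` for `0 < ε < 1`. -/
def logn (ε : ℝ) : ℝ := -Real.log ε

/-- The tangential slender body multiplier `m_ε^t`. -/
def mt (ε : ℝ) : ℤ → ℝ := fun k =>
  if k = 0 then logn ε / (2 * Real.pi) else
    let x := 2 * Real.pi * ε * |(k : ℝ)|
    let K0 := besselK 0 x
    let K1 := besselK 1 x
    (2*K0*K1 + x * (K0^2 - K1^2)) / (8 * Real.pi^2 * ε * |(k:ℝ)| * K1^2)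

/-- The normal slender body multiplier `m_ε^n`. -/
def mn (ε : ℝ) : ℤ → ℝ := fun k =>
  if k = 0 then logn ε / (4 * Real.pi) else
    let x := 2 * Real.pi * ε * |(k : ℝ)|
    let K0 := besselK 0 x
    let K1 := besselK 1 x
    let K2 := besselK 2 x
    (2*K0*K1*K2 + x * (K1^2*(K0+K2) - 2*K0^2*K2))
      / (4 * Real.pi^2 * ε * |(k:ℝ)| * (4*K1^2*K2 + x * K1 * (K1^2 - K0*K2)))

/-- Fourier multiplier operator with symbol `m`, on complex scalar functions:
`(T_m h)(s) = Σ_k m(k) ℱ[h](k) e^{−2πiks}`. -/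
def TmC (m : ℤ → ℝ) (h : ℝ → ℂ) : ℝ → ℂ :=
  fun s => ∑' k : ℤ, (m k : ℂ) * fc h k *
    Complex.exp (-(2 * (Real.pi : ℂ) * Complex.I * (k : ℂ) * (s : ℂ)))

/-- Fourier multiplier operator with (real) symbol `m` acting componentwise on ℝ³-valued
functions. -/
def Tm (m : ℤ → ℝ) (h : ℝ → V) : ℝ → V :=
  fun s => (WithLp.equiv 2 (Fin 3 → ℝ)).symm
    (fun i => (TmC m (fun t => ((h t i : ℝ) : ℂ)) s).re)

/-- Euclidean dot product on ℝ³. -/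
def dotV (x y : V) : ℝ := ∑ i, x i * y i

/-- `a · conj b` for `a b : ℂ³`. -/
def fdot (a b : VC) : ℂ := ∑ i, a i * (starRingEnd ℂ) (b i)

/-- Tangential projection `P_{u} h = (u·h) u` (with `u = X_s`). -/
def Ptan (u h : ℝ → V) : ℝ → V := fun s => dotV (u s) (h s) • u s

/-- Normal projection `P⊥_{u} h = h − (u·h) u`. -/
def Pperp (u h : ℝ → V) : ℝ → V := fun s => h s - Ptan u h s

/-- The force-to-velocity map `ℒ̄_ε` along a curve with unit tangent `u = X_s`. -/
def Leps (ε : ℝ) (u f : ℝ → V) : ℝ → V :=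
  fun s => Ptan u (Tm (mt ε) (Ptan u f)) s + Pperp u (Tm (mn ε) (Pperp u f)) s

/-- A (1-periodic) curve of Sobolev regularity `σ` parametrized by arclength:
`X ∈ H^σ(𝕋;ℝ³)` with `|X_s| = 1` a.e. -/
structure IsCurve (σ : ℝ) (X : ℝ → V) : Prop where
  periodic : Function.Periodic X 1
  mem : MemHV σ X
  unit : ∀ᵐ s : ℝ, ‖deriv X s‖ = 1

/-- The tangential part `(X_s · X_ssss) X_s` of `X_ssss`. -/
def tangential4 (X : ℝ → V) : ℝ → V :=
  fun s => dotV (deriv X s) (iteratedDeriv 4 X s) • deriv X s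

/-- `τ` is a weak solution of the tension equation
`(ℒ̄_ε[(τX_s)_s])_s·X_s = (ℒ̄_ε[X_ssss])_s·X_s`. -/
def WeakTension (ε : ℝ) (X : ℝ → V) (τ : ℝ → ℝ) : Prop :=
  ∀ φ : ℝ → ℝ, Function.Periodic φ 1 → MemHR 1 φ →
    (∑' k : ℤ,
      ((mt ε k : ℂ) * fdot (fcV (fun s => deriv φ s • deriv X s) k)
          (fcV (fun s => deriv τ s • deriv X s) k)
        + (mn ε k : ℂ) * fdot (fcV (fun s => φ s • iteratedDeriv 2 X s) k)
          (fcV (fun s => τ s • iteratedDeriv 2 X s) k)))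
    = ∑' k : ℤ,
      ((mt ε k : ℂ) * fdot (fcV (fun s => deriv φ s • deriv X s) k) (fcV (tangential4 X) k)
        + (mn ε k : ℂ) * fdot (fcV (fun s => φ s • iteratedDeriv 2 X s) k)
          (fcV (Pperp (deriv X) (iteratedDeriv 4 X)) k))

/-- The remainder `R[X] = ℒ̄_ε[∂_s⁴X] − T_{m_ε^n}(∂_s⁴X)`. -/
def Rop (ε : ℝ) (X : ℝ → V) : ℝ → V :=
  fun s => Leps ε (deriv X) (iteratedDeriv 4 X) s - Tm (mn ε) (iteratedDeriv 4 X) s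

/-- `ℒ̄_ε[(τ X_s)_s] = P_{X_s} T_{m_ε^t}(τ_s X_s) + P⊥_{X_s} T_{m_ε^n}(τ X_ss)`. -/
def tensionForce (ε : ℝ) (X : ℝ → V) (τ : ℝ → ℝ) : ℝ → V :=
  fun s => Ptan (deriv X) (Tm (mt ε) (fun r => deriv τ r • deriv X r)) s
         + Pperp (deriv X) (Tm (mn ε) (fun r => τ r • iteratedDeriv 2 X r)) s

/-- The symbol `λ_k = m_ε^n(k) (2πk)⁴` of `A = T_{m_ε^n} ∂_s⁴`. -/
def lamb (ε : ℝ) (k : ℤ) : ℝ := mn ε k * (2 * Real.pi * (k:ℝ))^4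

/-- The semigroup `e^{−t a A}`, i.e. the multiplier with symbol `e^{−a λ_k t}`
(`a` is a time-rescaling factor; `a = 1` is the unrescaled evolution). -/
def heat (ε a t : ℝ) (h : ℝ → V) : ℝ → V :=
  Tm (fun k => Real.exp (-(a * lamb ε k) * t)) h

/-- `X` is a solution on `[0,T]` of the (time-rescaled by `a`) filament evolution
`∂ₜX = −a ℒ̄_ε[(X_sss − τX_s)_s]`, `|X_s|² = 1`, with initial data `X0` and tension field `τ`,
in the mild (Duhamel) formulation, belonging to `C([0,T];H²) ∩ L²([0,T];H^{7/2})`. -/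
structure IsSolutionOn (ε a T : ℝ) (X0 : ℝ → V) (X : ℝ → ℝ → V) (τ : ℝ → ℝ → ℝ) : Prop where
  curve : ∀ t ∈ Set.Icc (0:ℝ) T, IsCurve 2 (X t)
  contH2 : ∀ t ∈ Set.Icc (0:ℝ) T, ∀ δ > (0:ℝ), ∃ η > (0:ℝ), ∀ t' ∈ Set.Icc (0:ℝ) T,
      |t' - t| < η → HnV 2 (fun s => X t' s - X t s) < δ
  l2H : IntegrableOn (fun t => HsqV (7/2) (X t)) (Set.Icc 0 T)
  init : X 0 = X0
  tension : ∀ᵐ r ∂(volume.restrict (Set.Icc (0:ℝ) T)),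
      Function.Periodic (τ r) 1 ∧ MemHR (1/2) (τ r) ∧ WeakTension ε (X r) (τ r)
  duhamel : ∀ t ∈ Set.Icc (0:ℝ) T, ∀ s : ℝ,
      X t s = heat ε a t X0 s
        + ∫ r in (0:ℝ)..t,
            (heat ε a (t - r)
              (fun y => a • (tensionForce ε (X r) (τ r) y - Rop ε (X r) y))) s

/-- `(I + u ⊗ u) w`. -/
def rftApply (u w : ℝ → V) : ℝ → V := fun s => w s + dotV (u s) (w s) • u s

/-- `Y` is a solution on `[0,T]` of the time-rescaled resistive force theory evolution
`∂ₜY = −(1/(4π))(I + Y_s⊗Y_s)(Y_sss − τ_Y Y_s)_s`, `|Y_s| = 1`, with initial data `X0` and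
RFT tension `τY`, belonging to `C([0,T];H⁴) ∩ L²([0,T];H⁶)`. -/
structure IsRFTSolutionOn (T : ℝ) (X0 : ℝ → V) (Y : ℝ → ℝ → V) (τY : ℝ → ℝ → ℝ) : Prop where
  curve : ∀ t ∈ Set.Icc (0:ℝ) T, Function.Periodic (Y t) 1 ∧ MemHV 4 (Y t) ∧
      (∀ᵐ s : ℝ, ‖deriv (Y t) s‖ = 1)
  contH4 : ∀ t ∈ Set.Icc (0:ℝ) T, ∀ δ > (0:ℝ), ∃ η > (0:ℝ), ∀ t' ∈ Set.Icc (0:ℝ) T,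
      |t' - t| < η → HnV 4 (fun s => Y t' s - Y t s) < δ
  l2H : IntegrableOn (fun t => HsqV 6 (Y t)) (Set.Icc 0 T)
  init : Y 0 = X0
  tension : ∀ t ∈ Set.Icc (0:ℝ) T, Function.Periodic (τY t) 1 ∧ MemHR 1 (τY t) ∧
      ∀ s : ℝ,
        dotV (deriv (rftApply (deriv (Y t))
            (fun x => deriv (fun y => τY t y • deriv (Y t) y) x)) s) (deriv (Y t) s)
        = dotV (deriv (rftApply (deriv (Y t)) (iteratedDeriv 4 (Y t))) s) (deriv (Y t) s)
  evol : ∀ t ∈ Set.Icc (0:ℝ) T, ∀ s : ℝ,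
      HasDerivAt (fun r => Y r s)
        (-((1/(4*Real.pi)) • rftApply (deriv (Y t))
            (fun x => deriv (fun y => iteratedDeriv 3 (Y t) y - τY t y • deriv (Y t) y) x) s)) t

/-!
For `0 < x ≤ 1` three estimates on the Bessel functions suffice: `0 ≤ K₀ ≤ K₁ ≤ K₂`,
`x K₁(x) ≥ e^{-x}` (bound `e^{-x cosh t} ≥ e^{-x} e^{-x sinh t}` and substitute `u = sinh t`) and
`K₀(x) ≤ log (1 + 2/x)` (bound `e^{-x cosh t} ≤ 1 / (1 + x eᵗ / 2)`, whose integral is explicit).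
They give `x K₀ ≤ 2` and `K₀ / (x K₁) ≤ K₀ eˣ ≤ K₀ + 4`. Dropping the negative terms of the
numerators then yields `m_ε^t(k) ≤ (K₀ + 4)/(2π)` and `m_ε^n(k) ≤ (K₀ + 8)/(4π)` at
`x = 2πε|k|`, while `K₀(2πε|k|) ≤ |log ε|` because `|k| ≥ 1`. So both differences are at most `2/π`.
-/

open Real Set Filter Topology
open scoped Nat

section Bessel

variable {x : ℝ}

lemma besselK_integrand_le (hx : 0 < x) (j : ℕ) {t : ℝ} (ht : 0 ≤ t) :
    exp (-x * cosh t) * cosh (j * t) ≤ (j + 1)! * (2 / x) ^ (j + 1) * exp (-t) := by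
  have hcosh : x / 2 * exp t ≤ x * cosh t := by
    rw [cosh_eq]; nlinarith [exp_pos (-t)]
  have hexp : (x / 2 * exp t) ^ (j + 1) / (j + 1)! ≤ exp (x * cosh t) :=
    (div_le_div_of_nonneg_right (pow_le_pow_left₀ (by positivity) hcosh _) (by positivity)).trans
      (pow_div_factorial_le_exp _ (by positivity) _)
  have hcosh_j : cosh (j * t) ≤ exp t ^ j := by
    rw [← exp_nat_mul, cosh_eq]
    nlinarith [exp_le_exp.2 (show -(j * t) ≤ j * t by nlinarith [j.cast_nonneg (α := ℝ)])]
  rw [neg_mul, exp_neg, exp_neg]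
  calc (exp (x * cosh t))⁻¹ * cosh (j * t)
      ≤ ((x / 2 * exp t) ^ (j + 1) / (j + 1)!)⁻¹ * exp t ^ j := by
        gcongr
    _ = (j + 1)! * (2 / x) ^ (j + 1) * (exp t)⁻¹ := by
        rw [inv_div, mul_pow, div_pow, div_pow, pow_succ (exp t)]
        field_simp

lemma integrableOn_besselK_integrand (hx : 0 < x) (j : ℕ) :
    IntegrableOn (fun t => exp (-x * cosh t) * cosh (j * t)) (Ioi 0) := by
  refine Integrable.mono' ((integrableOn_exp_neg_Ioi 0).const_mul ((j + 1)! * (2 / x) ^ (j + 1)))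
    (by fun_prop : Continuous _).aestronglyMeasurable ?_
  filter_upwards [ae_restrict_mem measurableSet_Ioi] with t ht
  rw [norm_of_nonneg (by positivity)]
  exact besselK_integrand_le hx j (le_of_lt ht)

lemma besselK_nonneg (j : ℕ) (x : ℝ) : 0 ≤ besselK j x :=
  setIntegral_nonneg measurableSet_Ioi fun t _ => by positivity

lemma besselK_mono (hx : 0 < x) {i j : ℕ} (hij : i ≤ j) : besselK i x ≤ besselK j x := by
  refine setIntegral_mono_on (integrableOn_besselK_integrand hx i)
    (integrableOn_besselK_integrand hx j) measurableSet_Ioi fun t ht => ?_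
  have ht : 0 ≤ t := le_of_lt ht
  gcongr
  rw [cosh_le_cosh, abs_of_nonneg (by positivity), abs_of_nonneg (by positivity)]
  gcongr

lemma exp_neg_le_mul_besselK_one (hx : 0 < x) : exp (-x) ≤ x * besselK 1 x := by
  have hderiv : ∀ t ∈ Ici (0 : ℝ), HasDerivAt (fun t => -exp (-x * sinh t))
      (x * cosh t * exp (-x * sinh t)) t := fun t _ =>
    (((hasDerivAt_sinh t).const_mul (-x)).exp).neg.congr_deriv (by ring)
  have hnonneg : ∀ t ∈ Ioi (0 : ℝ), 0 ≤ x * cosh t * exp (-x * sinh t) := fun t _ => by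
    positivity
  have hlim : Tendsto (fun t => -exp (-x * sinh t)) atTop (𝓝 (-0)) := by
    refine (tendsto_exp_atBot.comp ((tendsto_atTop_mono' _ ?_ tendsto_id).const_mul_atTop_of_neg
      (neg_lt_zero.2 hx))).neg
    filter_upwards [eventually_ge_atTop 0] with t ht using self_le_sinh_iff.2 ht
  have hint := integrableOn_Ioi_deriv_of_nonneg' hderiv hnonneg hlim
  have hone : ∫ t in Ioi 0, x * cosh t * exp (-x * sinh t) = 1 := by
    rw [integral_Ioi_of_hasDerivAt_of_nonneg' hderiv hnonneg hlim]
    simp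
  calc exp (-x) = ∫ t in Ioi 0, exp (-x) * (x * cosh t * exp (-x * sinh t)) := by
        rw [integral_const_mul, hone, mul_one]
    _ ≤ ∫ t in Ioi 0, x * (exp (-x * cosh t) * cosh ((1 : ℕ) * t)) := by
        refine setIntegral_mono_on (hint.const_mul _)
          ((integrableOn_besselK_integrand hx 1).const_mul x) measurableSet_Ioi fun t ht => ?_
        have hcosh : cosh t - sinh t ≤ 1 := by
          rw [cosh_sub_sinh]
          exact exp_le_one_iff.2 (neg_nonpos.2 (le_of_lt ht))
        have hexp : exp (-x) * exp (-x * sinh t) ≤ exp (-x * cosh t) := by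
          rw [← exp_add]
          exact exp_le_exp.2 (by nlinarith)
        push_cast
        rw [one_mul]
        nlinarith [mul_le_mul_of_nonneg_left hexp (by positivity : 0 ≤ x * cosh t)]
    _ = x * besselK 1 x := by rw [integral_const_mul, besselK]

lemma besselK_zero_le_log (hx : 0 < x) : besselK 0 x ≤ log (1 + 2 / x) := by
  have hderiv : ∀ t ∈ Ici (0 : ℝ), HasDerivAt (fun t => -log (exp (-t) + x / 2))
      (exp (-t) / (exp (-t) + x / 2)) t := fun t _ =>
    ((((hasDerivAt_neg t).exp).add_const (x / 2)).log (by positivity)).neg.congr_deriv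
      (by ring)
  have hnonneg : ∀ t ∈ Ioi (0 : ℝ), 0 ≤ exp (-t) / (exp (-t) + x / 2) := fun t _ => by
    positivity
  have hlim : Tendsto (fun t => -log (exp (-t) + x / 2)) atTop (𝓝 (-log (0 + x / 2))) :=
    ((continuousAt_log (by positivity)).tendsto.comp
      (tendsto_exp_neg_atTop_nhds_zero.add_const _)).neg
  calc besselK 0 x = ∫ t in Ioi 0, exp (-x * cosh t) * cosh ((0 : ℕ) * t) := rfl
    _ ≤ ∫ t in Ioi 0, exp (-t) / (exp (-t) + x / 2) := by
        refine setIntegral_mono_on (integrableOn_besselK_integrand hx 0)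
          (integrableOn_Ioi_deriv_of_nonneg' hderiv hnonneg hlim) measurableSet_Ioi
          fun t _ => ?_
        have hu : 1 + x * cosh t ≤ exp (x * cosh t) := by linarith [add_one_le_exp (x * cosh t)]
        have hcosh : x / 2 ≤ x * cosh t * exp (-t) := by
          have h : exp t * exp (-t) = 1 := by rw [← exp_add, add_neg_cancel, exp_zero]
          rw [cosh_eq]
          nlinarith [mul_nonneg hx.le (sq_nonneg (exp (-t)))]
        rw [Nat.cast_zero, zero_mul, cosh_zero, mul_one, le_div_iff₀ (by positivity), neg_mul,
          exp_neg, inv_mul_le_iff₀ (exp_pos _)]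
        nlinarith [exp_pos (-t)]
    _ = log (1 + 2 / x) := by
        rw [integral_Ioi_of_hasDerivAt_of_nonneg' hderiv hnonneg hlim, neg_zero, exp_zero, zero_add,
          neg_sub_neg, ← log_div (by positivity) (by positivity)]
        congr 1
        field_simp
        ring

lemma mul_besselK_zero_le_two (hx : 0 < x) : x * besselK 0 x ≤ 2 := by
  have h := mul_le_mul_of_nonneg_left ((besselK_zero_le_log hx).trans
    (log_le_sub_one_of_pos (by positivity))) hx.le
  rwa [add_sub_cancel_left, mul_div_cancel₀ _ hx.ne'] at h

lemma besselK_zero_div_le (hx : 0 < x) (hx1 : x ≤ 1) :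
    besselK 0 x / (x * besselK 1 x) ≤ besselK 0 x + 4 := by
  have hK0 := besselK_nonneg 0 x
  have hexp : exp x ≤ 1 + 2 * x := by
    linarith [show exp x ≤ 1 + x * (1 + 1) by simpa using exp_bound' hx.le hx1 one_pos]
  calc besselK 0 x / (x * besselK 1 x) ≤ besselK 0 x / exp (-x) :=
        div_le_div_of_nonneg_left hK0 (exp_pos _) (exp_neg_le_mul_besselK_one hx)
    _ = besselK 0 x * exp x := by rw [exp_neg, div_inv_eq_mul]
    _ ≤ besselK 0 x * (1 + 2 * x) := by gcongr
    _ ≤ besselK 0 x + 4 := by linarith [mul_besselK_zero_le_two hx]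

end Bessel

section Multipliers

variable {ε : ℝ} {k : ℤ}

lemma besselK_zero_le_logn {κ : ℝ} (hε : 0 < ε) (hκ : 1 ≤ κ) (hx1 : 2 * π * ε * κ ≤ 1) :
    besselK 0 (2 * π * ε * κ) ≤ logn ε := by
  have hx : 0 < 2 * π * ε * κ := by positivity
  have h3ε : 3 * ε ≤ 2 * π * ε * κ := by
    nlinarith [pi_gt_three, mul_le_mul_of_nonneg_left hκ (by positivity : 0 ≤ 2 * π * ε)]
  calc besselK 0 (2 * π * ε * κ) ≤ log (1 + 2 / (2 * π * ε * κ)) := besselK_zero_le_log hx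
    _ ≤ log (1 / ε) := by
        gcongr
        calc 1 + 2 / (2 * π * ε * κ) ≤ 3 / (2 * π * ε * κ) := by
              rw [le_div_iff₀ hx, add_mul, div_mul_cancel₀ _ hx.ne']; linarith
          _ ≤ 1 / ε := by rw [div_le_div_iff₀ hx hε]; linarith
    _ = logn ε := by rw [one_div, log_inv, logn]


lemma mt_le (hε : 0 < ε) (hk : k ≠ 0) (hx1 : 2 * π * ε * |(k : ℝ)| ≤ 1) :
    mt ε k ≤ (besselK 0 (2 * π * ε * |(k : ℝ)|) + 4) / (2 * π) := by
  have hk' : 0 < |(k : ℝ)| := abs_pos.2 (Int.cast_ne_zero.2 hk)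
  set x := 2 * π * ε * |(k : ℝ)| with hx_def
  have hx : 0 < x := by positivity
  have hy : 0 < x * besselK 1 x := (exp_pos _).trans_le (exp_neg_le_mul_besselK_one hx)
  have hK1 : 0 < besselK 1 x := pos_of_mul_pos_right hy hx.le
  have hK0 := besselK_nonneg 0 x
  have hK01 := besselK_mono hx zero_le_one
  simp only [mt, if_neg hk, ← hx_def]
  calc (2 * besselK 0 x * besselK 1 x + x * (besselK 0 x ^ 2 - besselK 1 x ^ 2))
        / (8 * π ^ 2 * ε * |(k : ℝ)| * besselK 1 x ^ 2)
      ≤ 2 * besselK 0 x * besselK 1 x / (8 * π ^ 2 * ε * |(k : ℝ)| * besselK 1 x ^ 2) := by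
        have hsq : besselK 0 x ^ 2 ≤ besselK 1 x ^ 2 := pow_le_pow_left₀ hK0 hK01 2
        gcongr
        nlinarith [mul_le_mul_of_nonneg_left hsq hx.le]
    _ = besselK 0 x / (x * besselK 1 x) / (2 * π) := by
        rw [hx_def]
        field_simp
        ring
    _ ≤ (besselK 0 x + 4) / (2 * π) := by gcongr; exact besselK_zero_div_le hx hx1

lemma mn_le (hε : 0 < ε) (hk : k ≠ 0) (hx1 : 2 * π * ε * |(k : ℝ)| ≤ 1) :
    mn ε k ≤ (besselK 0 (2 * π * ε * |(k : ℝ)|) + 8) / (4 * π) := by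
  have hk' : 0 < |(k : ℝ)| := abs_pos.2 (Int.cast_ne_zero.2 hk)
  set x := 2 * π * ε * |(k : ℝ)| with hx_def
  have hx : 0 < x := by positivity
  have hy : 0 < x * besselK 1 x := (exp_pos _).trans_le (exp_neg_le_mul_besselK_one hx)
  have hK1 : 0 < besselK 1 x := pos_of_mul_pos_right hy hx.le
  have hK0 := besselK_nonneg 0 x
  have hK01 := besselK_mono hx zero_le_one
  have hK12 := besselK_mono hx one_le_two
  have hK2 : 0 < besselK 2 x := hK1.trans_le hK12
  have hxK0 := mul_besselK_zero_le_two hx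
  have h4x : 0 < 4 - x := by linarith
  simp only [mn, if_neg hk, ← hx_def]
  set K0 := besselK 0 x
  set K1 := besselK 1 x
  set K2 := besselK 2 x
  have hnum : 2 * K0 * K1 * K2 + x * (K1 ^ 2 * (K0 + K2) - 2 * K0 ^ 2 * K2)
      ≤ 2 * K1 * K2 * (K0 + x * K1) := by
    nlinarith [mul_nonneg (mul_nonneg hx.le (sq_nonneg K0)) hK2.le,
      mul_le_mul_of_nonneg_left (hK01.trans hK12) (by positivity : 0 ≤ x * K1 ^ 2)]
  have hden :
      (4 - x) * (x * K1) * K1 * K2 ≤ x * (4 * K1 ^ 2 * K2 + x * K1 * (K1 ^ 2 - K0 * K2)) := by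
    nlinarith [mul_le_mul_of_nonneg_left hK01 (by positivity : 0 ≤ x ^ 2 * K1 * K2),
      pow_pos hK1 3]
  calc (2 * K0 * K1 * K2 + x * (K1 ^ 2 * (K0 + K2) - 2 * K0 ^ 2 * K2))
        / (4 * π ^ 2 * ε * |(k : ℝ)| * (4 * K1 ^ 2 * K2 + x * K1 * (K1 ^ 2 - K0 * K2)))
      = (2 * K0 * K1 * K2 + x * (K1 ^ 2 * (K0 + K2) - 2 * K0 ^ 2 * K2))
        / (2 * π * (x * (4 * K1 ^ 2 * K2 + x * K1 * (K1 ^ 2 - K0 * K2)))) := by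
        rw [hx_def]; ring
    _ ≤ 2 * K1 * K2 * (K0 + x * K1) / (2 * π * ((4 - x) * (x * K1) * K1 * K2)) :=
        div_le_div₀ (by positivity) hnum
          (mul_pos (by positivity) (mul_pos (mul_pos (mul_pos h4x hy) hK1) hK2)) (by gcongr)
    _ = (K0 / (x * K1) + 1) / (π * (4 - x)) := by field_simp
    _ ≤ (K0 + 5) / (π * (4 - x)) :=
        div_le_div_of_nonneg_right (by linarith [besselK_zero_div_le hx hx1]) (by positivity)
    _ ≤ (K0 + 8) / (4 * π) := by
        rw [div_le_div_iff₀ (by positivity) (by positivity)]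
        nlinarith [pi_pos]

end Multipliers

/-- **Low wavenumber refinement** (Lemma 2.3). -/
theorem low_wavenumber_refinement :
    ∃ c : ℝ, 0 < c ∧ ∀ ε ∈ Set.Ioo (0:ℝ) 1,
      (∀ k : ℤ, k ≠ 0 → |(k:ℝ)| < 1 / (2 * Real.pi * ε) →
        mt ε k - logn ε / (2 * Real.pi) ≤ c * (1 + |Real.log (abs (k:ℝ))|) ∧
        mn ε k - logn ε / (4 * Real.pi) ≤ c * (1 + |Real.log (abs (k:ℝ))|)) ∧
      mt ε 0 - logn ε / (2 * Real.pi) = 0 ∧ mn ε 0 - logn ε / (4 * Real.pi) = 0 := by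
  refine ⟨1, one_pos, fun ε hε => ⟨fun k hk hkε => ?_, by simp [mt], by simp [mn]⟩⟩
  have hk1 : 1 ≤ |(k : ℝ)| := by exact_mod_cast Int.one_le_abs hk
  have hx1 : 2 * π * ε * |(k : ℝ)| ≤ 1 := by
    rw [lt_div_iff₀ (by nlinarith [pi_pos, hε.1])] at hkε; linarith
  have hK0 := besselK_zero_le_logn hε.1 hk1 hx1
  have hrhs : 2 / π ≤ 1 * (1 + |log (abs (k : ℝ))|) := by
    rw [div_le_iff₀ pi_pos]; nlinarith [pi_gt_three, abs_nonneg (log (abs (k : ℝ)))]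
  constructor
  · calc mt ε k - logn ε / (2 * π)
        ≤ (besselK 0 (2 * π * ε * |(k : ℝ)|) + 4) / (2 * π) - logn ε / (2 * π) := by
          gcongr; exact mt_le hε.1 hk hx1
      _ ≤ 2 / π := by rw [← sub_div, div_le_div_iff₀ (by positivity) pi_pos]; nlinarith [pi_pos]
      _ ≤ _ := hrhs
  · calc mn ε k - logn ε / (4 * π)
        ≤ (besselK 0 (2 * π * ε * |(k : ℝ)|) + 8) / (4 * π) - logn ε / (4 * π) := by
          gcongr; exact mn_le hε.1 hk hx1
      _ ≤ 2 / π := by rw [← sub_div, div_le_div_iff₀ (by positivity) pi_pos]; nlinarith [pi_pos]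
      _ ≤ _ := hrhs

end Filament
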